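/- arXiv:2304.14666 — 2 statements merged into one kernel-verified Lean document; each statement's English description precedes it below -/
import Mathlib

section
/- Let X be an n×p real matrix such that XᵀX is invertible. For every p×n real matrix A satisfying A·X = I_p (the p×p identity matrix), the matrix A·Aᵀ − (XᵀX)⁻¹ is positive semidefinite. (This is the deterministic core of the Gauss–Markov theorem: under homoskedastic errors with covariance σ²I, any linear unbiased estimator Ay of β has covariance σ²AAᵀ, which dominates the OLS covariance σ²(XᵀX)⁻¹ in the positive-semidefinite order, so OLS is the best linear unbiased estimator.) -/
open Matrix BigOperators

/-!
With `B = (XᴴX)⁻¹` and `D = A - BXᴴ`, the constraint `AX = 1` gives `DX = 0`, so the cross terms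
in `AAᴴ = (BXᴴ + D)(BXᴴ + D)ᴴ` vanish and `AAᴴ = BXᴴXB + DDᴴ = B + DDᴴ`.
-/

namespace Matrix

variable {m n R : Type*} [Fintype m] [Fintype n] [DecidableEq n]

theorem mul_conjTranspose_eq_inv_add_of_mul_eq_one [CommRing R] [StarRing R]
    {X : Matrix m n R} {A : Matrix n m R} (hX : IsUnit (Xᴴ * X)) (hA : A * X = 1) :
    A * Aᴴ = (Xᴴ * X)⁻¹ + (A - (Xᴴ * X)⁻¹ * Xᴴ) * (A - (Xᴴ * X)⁻¹ * Xᴴ)ᴴ := by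
  set B := (Xᴴ * X)⁻¹
  have hB : Bᴴ = B := (isHermitian_conjTranspose_mul_self X).inv
  have hBX : B * (Xᴴ * X) = 1 := nonsing_inv_mul _ ((isUnit_iff_isUnit_det _).mp hX)
  have hXA : Xᴴ * Aᴴ = 1 := by rw [← conjTranspose_mul, hA, conjTranspose_one]
  have hAXB : A * (X * B) = B := by rw [← Matrix.mul_assoc, hA, Matrix.one_mul]
  have hBXA : B * Xᴴ * Aᴴ = B := by rw [Matrix.mul_assoc, hXA, Matrix.mul_one]
  have hBXXB : B * Xᴴ * (X * B) = B := by
    rw [Matrix.mul_assoc, ← Matrix.mul_assoc Xᴴ, ← Matrix.mul_assoc, hBX, Matrix.one_mul]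
  rw [conjTranspose_sub, conjTranspose_mul, conjTranspose_conjTranspose, hB,
    Matrix.sub_mul, Matrix.mul_sub, Matrix.mul_sub, hAXB, hBXA, hBXXB]
  abel

open scoped ComplexOrder in
theorem posSemidef_mul_conjTranspose_sub_inv_of_mul_eq_one {𝕜 : Type*} [RCLike 𝕜]
    {X : Matrix m n 𝕜} {A : Matrix n m 𝕜} (hX : IsUnit (Xᴴ * X)) (hA : A * X = 1) :
    (A * Aᴴ - (Xᴴ * X)⁻¹).PosSemidef := by
  rw [mul_conjTranspose_eq_inv_add_of_mul_eq_one hX hA, add_sub_cancel_left]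
  exact posSemidef_self_mul_conjTranspose _

end Matrix

/-- Deterministic core of the Gauss–Markov theorem: if `XᵀX` is invertible and
`A` is any left inverse of `X` (so that `Ay` is a linear unbiased estimator of
`β`), then `AAᵀ − (XᵀX)⁻¹` is positive semidefinite. -/
theorem gauss_markov_core {n p : ℕ} (X : Matrix (Fin n) (Fin p) ℝ)
    (hX : IsUnit (Xᵀ * X)) (A : Matrix (Fin p) (Fin n) ℝ)
    (hA : A * X = (1 : Matrix (Fin p) (Fin p) ℝ)) :
    (A * Aᵀ - (Xᵀ * X)⁻¹).PosSemidef := by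
  rw [← conjTranspose_eq_transpose_of_trivial] at hX ⊢
  exact posSemidef_mul_conjTranspose_sub_inv_of_mul_eq_one hX hA
end

section
/- Let X be an n×p real matrix, n ≥ 1, whose first column is the all-ones vector, such that XᵀX is invertible, and let x̄ ∈ ℝᵖ be the vector of column means of X. Then the leverage of the mean point equals 1/n, i.e., x̄ᵀ(XᵀX)⁻¹x̄ = 1/n, and for every vector v ∈ ℝᵖ whose first coordinate equals 1, one has vᵀ(XᵀX)⁻¹v ≥ 1/n. (Hence the prediction variance se(ŷ)² = σ²·vᵀ(XᵀX)⁻¹v, and with it the tolerance interval width, is minimized at the multivariate mean of the design and grows toward the boundary of the parameter space.) -/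
open Matrix BigOperators

/-- For a design matrix `X` with an intercept column of ones and `XᵀX`
invertible, the leverage of the column-mean point `x̄` equals `1/n`, and it is
minimal: every prediction point `v` with first coordinate `1` has leverage
`vᵀ(XᵀX)⁻¹v ≥ 1/n`. -/
theorem leverage_min_at_mean {n p : ℕ} (hn : 1 ≤ n) (hp : 0 < p)
    (X : Matrix (Fin n) (Fin p) ℝ)
    (hones : ∀ i, X i ⟨0, hp⟩ = 1) (hX : IsUnit (Xᵀ * X)) :
    let xbar : Fin p → ℝ := fun j => (∑ i, X i j) / n
    xbar ⬝ᵥ ((Xᵀ * X)⁻¹).mulVec xbar = 1 / n ∧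
    ∀ v : Fin p → ℝ, v ⟨0, hp⟩ = 1 →
      1 / n ≤ v ⬝ᵥ ((Xᵀ * X)⁻¹).mulVec v := by
  intro xbar
  have hn0 : (n : ℝ) ≠ 0 := Nat.cast_ne_zero.mpr (by omega)
  set A : Matrix (Fin p) (Fin p) ℝ := Xᵀ * X with hAdef
  have hdet : IsUnit A.det := (Matrix.isUnit_iff_isUnit_det A).mp hX
  have hinvmul : A⁻¹ * A = 1 := Matrix.nonsing_inv_mul A hdet
  -- e0
  set e0 : Fin p → ℝ := Pi.single ⟨0, hp⟩ 1 with he0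
  have hXe0 : X *ᵥ e0 = fun _ => 1 := by
    funext i; simp [he0, Matrix.mulVec_single, hones i]
  have hAe0 : A *ᵥ e0 = fun j => ∑ i, X i j := by
    rw [hAdef, ← Matrix.mulVec_mulVec, hXe0]
    funext j
    simp [Matrix.mulVec, dotProduct, Matrix.transpose_apply]
  have hxbar : xbar = (n : ℝ)⁻¹ • (A *ᵥ e0) := by
    funext j; simp [hAe0, xbar, div_eq_inv_mul, mul_comm]
  have hkey : A⁻¹ *ᵥ xbar = (n : ℝ)⁻¹ • e0 := by
    rw [hxbar, Matrix.mulVec_smul, Matrix.mulVec_mulVec, hinvmul, Matrix.one_mulVec]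
  have hxbar0 : xbar ⟨0, hp⟩ = 1 := by
    simp [xbar, hones, div_self hn0]
  -- part 1
  have part1 : xbar ⬝ᵥ A⁻¹ *ᵥ xbar = 1 / n := by
    rw [hkey, dotProduct_smul]
    simp [he0, dotProduct_single, hxbar0, one_div]
  refine ⟨part1, ?_⟩
  -- A pos def
  have hApsd : A.PosSemidef := by
    have := Matrix.posSemidef_conjTranspose_mul_self X
    simpa [hAdef] using this
  have hApd : A.PosDef := by
    refine Matrix.PosDef.of_dotProduct_mulVec_pos hApsd.1 (fun x hx => ?_)
    have h1 : 0 ≤ star x ⬝ᵥ A *ᵥ x := hApsd.dotProduct_mulVec_nonneg x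
    rcases h1.lt_or_eq with h | h
    · exact h
    · exfalso
      have h2 : A *ᵥ x = 0 := (hApsd.dotProduct_mulVec_zero_iff x).mp h.symm
      have : x = 0 := by
        have := congrArg (fun y => A⁻¹ *ᵥ y) h2
        simpa [Matrix.mulVec_mulVec, hinvmul] using this
      exact hx this
  have hInvPd : A⁻¹.PosDef := hApd.inv
  have hInvSymm : A⁻¹ᵀ = A⁻¹ := by
    rw [Matrix.transpose_nonsing_inv]
    congr 1
    simpa [hAdef] using (Matrix.transpose_mul Xᵀ X).symm ▸ rfl
  intro v hv
  have hInvPsd := hInvPd.posSemidef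
  set w : Fin p → ℝ := v - xbar with hwdef
  have hw0 : w ⟨0, hp⟩ = 0 := by simp [hwdef, hv, hxbar0]
  have hv' : v = w + xbar := by rw [hwdef]; ring
  have hcross1 : w ⬝ᵥ A⁻¹ *ᵥ xbar = 0 := by
    rw [hkey, dotProduct_smul]
    simp [he0, dotProduct_single, hw0]
  have hvecmul : xbar ᵥ* A⁻¹ = A⁻¹ *ᵥ xbar := by
    nth_rewrite 1 [← hInvSymm]
    rw [Matrix.vecMul_transpose]
  have hcross2 : xbar ⬝ᵥ A⁻¹ *ᵥ w = 0 := by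
    rw [Matrix.dotProduct_mulVec, hvecmul, hkey, smul_dotProduct]
    simp [he0, single_dotProduct, hw0]
  have hnn : 0 ≤ w ⬝ᵥ A⁻¹ *ᵥ w := by
    have := hInvPsd.dotProduct_mulVec_nonneg w
    simpa using this
  have hexp : v ⬝ᵥ A⁻¹ *ᵥ v
      = w ⬝ᵥ A⁻¹ *ᵥ w + w ⬝ᵥ A⁻¹ *ᵥ xbar + xbar ⬝ᵥ A⁻¹ *ᵥ w
        + xbar ⬝ᵥ A⁻¹ *ᵥ xbar := by
    rw [hv']
    simp only [Matrix.mulVec_add, add_dotProduct, dotProduct_add]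
    ring
  rw [hexp, hcross1, hcross2, part1]
  linarith
end
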